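/- arXiv:2104.01084 — 2 statements merged into one kernel-verified Lean document; each statement's English description precedes it below -/
import Mathlib

section
/- For α ∈ (0,1) and any q ∈ ℂ, the quantity v(α,q) = (1+α²)² + α(α²−1)(z(q)+z(q)⁻¹+w(q)+w(q)⁻¹) is real and non-negative, and v(α,q) = 0 only if q ∈ ℤ² (i.e. z(q) = w(q) = 1) and α = √2 − 1. -/
open Complex

/-- The Kac–Ward local factor `v(α,q) = (1+α²)² + α(α²−1)(z + z⁻¹ + w + w⁻¹)`,
where `z = exp(2πi Re q)` and `w = exp(2πi Im q)`. -/
noncomputable def kwFactor (α q : ℂ) : ℂ :=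
  (1 + α ^ 2) ^ 2 + α * (α ^ 2 - 1) *
    (Complex.exp (((2 * Real.pi * q.re : ℝ) : ℂ) * I)
      + (Complex.exp (((2 * Real.pi * q.re : ℝ) : ℂ) * I))⁻¹
      + Complex.exp (((2 * Real.pi * q.im : ℝ) : ℂ) * I)
      + (Complex.exp (((2 * Real.pi * q.im : ℝ) : ℂ) * I))⁻¹)

lemma exp_add_inv (θ : ℝ) :
    Complex.exp ((θ : ℂ) * I) + (Complex.exp ((θ : ℂ) * I))⁻¹
      = ((2 * Real.cos θ : ℝ) : ℂ) := by
  rw [← Complex.exp_neg, ← neg_mul, show (-(θ:ℂ)) = ((-θ : ℝ) : ℂ) by push_cast; ring,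
    Complex.exp_mul_I, Complex.exp_mul_I, ← Complex.ofReal_cos, ← Complex.ofReal_sin,
    ← Complex.ofReal_cos, ← Complex.ofReal_sin]
  push_cast [Real.cos_neg, Real.sin_neg]
  ring

lemma kw_eq (α : ℝ) (q : ℂ) :
    kwFactor (α : ℂ) q =
      (((1 + α ^ 2) ^ 2 + α * (α ^ 2 - 1) *
        (2 * Real.cos (2 * Real.pi * q.re) + 2 * Real.cos (2 * Real.pi * q.im)) : ℝ) : ℂ) := by
  have h1 := exp_add_inv (2 * Real.pi * q.re)
  have h2 := exp_add_inv (2 * Real.pi * q.im)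
  unfold kwFactor
  push_cast at h1 h2 ⊢
  linear_combination ((α:ℂ) * ((α:ℂ) ^ 2 - 1)) * (h1 + h2)

/-- For `α ∈ (0,1)` and any `q ∈ ℂ`, `v(α,q)` is real and non-negative, and it
vanishes only if `q ∈ ℤ²` and `α = √2 − 1`. -/
theorem stmt5 (α : ℝ) (hα : α ∈ Set.Ioo (0 : ℝ) 1) (q : ℂ) :
    (kwFactor (α : ℂ) q).im = 0 ∧ 0 ≤ (kwFactor (α : ℂ) q).re ∧
    (kwFactor (α : ℂ) q = 0 →
      ((∃ m : ℤ, q.re = m) ∧ (∃ n : ℤ, q.im = n)) ∧ α = Real.sqrt 2 - 1) := by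
  obtain ⟨hα0, hα1⟩ := hα
  set ca := Real.cos (2 * Real.pi * q.re) with hca
  set cb := Real.cos (2 * Real.pi * q.im) with hcb
  have hca1 : ca ≤ 1 := Real.cos_le_one _
  have hca1' : -1 ≤ ca := Real.neg_one_le_cos _
  have hcb1 : cb ≤ 1 := Real.cos_le_one _
  have hcb1' : -1 ≤ cb := Real.neg_one_le_cos _
  have hkey := kw_eq α q
  have him : (kwFactor (α : ℂ) q).im = 0 := by rw [hkey, Complex.ofReal_im]
  have hre : (kwFactor (α : ℂ) q).re
      = (1 + α ^ 2) ^ 2 + α * (α ^ 2 - 1) * (2 * ca + 2 * cb) := by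
    rw [hkey, Complex.ofReal_re]
  have hdecomp : (1 + α ^ 2) ^ 2 + α * (α ^ 2 - 1) * (2 * ca + 2 * cb)
      = (α ^ 2 + 2 * α - 1) ^ 2 + 2 * α * (1 - α ^ 2) * (1 - ca)
        + 2 * α * (1 - α ^ 2) * (1 - cb) := by ring
  have hpos : 0 < 2 * α * (1 - α ^ 2) := by nlinarith
  have h1 : 0 ≤ 2 * α * (1 - α ^ 2) * (1 - ca) := by nlinarith
  have h2 : 0 ≤ 2 * α * (1 - α ^ 2) * (1 - cb) := by nlinarith
  refine ⟨him, by rw [hre, hdecomp]; positivity, ?_⟩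
  intro h0
  have hre0 : (1 + α ^ 2) ^ 2 + α * (α ^ 2 - 1) * (2 * ca + 2 * cb) = 0 := by
    rw [← hre, h0]; simp
  rw [hdecomp] at hre0
  have hsq : (α ^ 2 + 2 * α - 1) ^ 2 = 0 := by nlinarith [sq_nonneg (α ^ 2 + 2 * α - 1)]
  have hca0 : ca = 1 := by nlinarith [sq_nonneg (α ^ 2 + 2 * α - 1)]
  have hcb0 : cb = 1 := by nlinarith [sq_nonneg (α ^ 2 + 2 * α - 1)]
  have hpi := Real.pi_pos
  constructor
  · constructor
    · obtain ⟨n, hn⟩ := (Real.cos_eq_one_iff _).mp hca0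
      exact ⟨n, mul_left_cancel₀ (a := 2 * Real.pi) (by positivity)
        (by linear_combination -hn)⟩
    · obtain ⟨n, hn⟩ := (Real.cos_eq_one_iff _).mp hcb0
      exact ⟨n, mul_left_cancel₀ (a := 2 * Real.pi) (by positivity)
        (by linear_combination -hn)⟩
  · have : (α + 1) ^ 2 = 2 := by nlinarith
    have h2' : Real.sqrt 2 = α + 1 := by
      rw [show (2:ℝ) = (α+1)^2 from this.symm]
      exact Real.sqrt_sq (by linarith)
    linarith
end

section
/- If i = 1 (respectively j = 1) and q ∈ Λ* + s_{ij}, then Re(q)Re(ω₁) + Im(q)Im(ω₁) ∈ ℤ + 1/2 (respectively Re(q)Re(ω₂) + Im(q)Im(ω₂) ∈ ℤ + 1/2); consequently, since ω₁, ω₂ ∈ ℤ², such q cannot lie in ℤ². In particular, for (i,j) ≠ (0,0) the product ∏_{q ∈ ℤ²/Λ* + s_{ij}} v(α_c, q) is non-zero, where v(α_c,q) = 2α_c²(4 − 2cos(2π Re q) − 2cos(2π Im q)). -/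
open Complex

lemma aux_not_half (a b : ℤ) : (a : ℝ) ≠ (b : ℝ) + 1 / 2 := by
  intro h
  have h' : (2 * a : ℝ) = 2 * b + 1 := by linarith
  have h'' : (2 * a : ℤ) = 2 * b + 1 := by exact_mod_cast h'
  omega

/-- If `(i,j) ≠ (0,0)` and `q ∈ Λ* + s_{ij}`, then `q·ω₁ ∈ ℤ + 1/2` when `i = 1`
(resp. `q·ω₂ ∈ ℤ + 1/2` when `j = 1`); consequently `q ∉ ℤ²`, and the critical
Kac–Ward local factor `v(α_c,q) = 2α_c²(4 − 2cos(2π Re q) − 2cos(2π Im q))` is non-zero. -/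
theorem stmt7 (ω₁ ω₂ : ℤ × ℤ) (i j : ℕ) (hi : i ≤ 1) (hj : j ≤ 1)
    (hij : ¬(i = 0 ∧ j = 0)) (q : ℂ)
    (h1 : ∃ m : ℤ, q.re * ω₁.1 + q.im * ω₁.2 = m + (i : ℝ) / 2)
    (h2 : ∃ m : ℤ, q.re * ω₂.1 + q.im * ω₂.2 = m + (j : ℝ) / 2) :
    (i = 1 → ∃ m : ℤ, q.re * ω₁.1 + q.im * ω₁.2 = m + 1 / 2) ∧
    (j = 1 → ∃ m : ℤ, q.re * ω₂.1 + q.im * ω₂.2 = m + 1 / 2) ∧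
    ¬((∃ m : ℤ, q.re = m) ∧ (∃ n : ℤ, q.im = n)) ∧
    2 * (Real.sqrt 2 - 1) ^ 2 *
      (4 - 2 * Real.cos (2 * Real.pi * q.re) - 2 * Real.cos (2 * Real.pi * q.im)) ≠ 0 := by
  have hor : i = 1 ∨ j = 1 := by omega
  have key : ¬((∃ m : ℤ, q.re = m) ∧ (∃ n : ℤ, q.im = n)) := by
    rintro ⟨⟨m, hm⟩, ⟨n, hn⟩⟩
    rcases hor with h | h
    · obtain ⟨k, hk⟩ := h1
      rw [h, hm, hn] at hk
      refine aux_not_half (m * ω₁.1 + n * ω₁.2) k ?_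
      push_cast
      push_cast at hk
      linarith
    · obtain ⟨k, hk⟩ := h2
      rw [h, hm, hn] at hk
      refine aux_not_half (m * ω₂.1 + n * ω₂.2) k ?_
      push_cast
      push_cast at hk
      linarith
  refine ⟨?_, ?_, key, ?_⟩
  · intro h; obtain ⟨k, hk⟩ := h1; rw [h] at hk; exact ⟨k, by push_cast at hk ⊢; linarith⟩
  · intro h; obtain ⟨k, hk⟩ := h2; rw [h] at hk; exact ⟨k, by push_cast at hk ⊢; linarith⟩
  · have hs : Real.sqrt 2 ≠ 1 := by
      intro h
      have := Real.sq_sqrt (by norm_num : (0:ℝ) ≤ 2)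
      rw [h] at this; norm_num at this
    have hc1 : Real.cos (2 * Real.pi * q.re) ≤ 1 := Real.cos_le_one _
    have hc2 : Real.cos (2 * Real.pi * q.im) ≤ 1 := Real.cos_le_one _
    have hne : 4 - 2 * Real.cos (2 * Real.pi * q.re) - 2 * Real.cos (2 * Real.pi * q.im) ≠ 0 := by
      intro h0
      have e1 : Real.cos (2 * Real.pi * q.re) = 1 := by linarith
      have e2 : Real.cos (2 * Real.pi * q.im) = 1 := by linarith
      obtain ⟨a, ha⟩ := (Real.cos_eq_one_iff _).mp e1
      obtain ⟨b, hb⟩ := (Real.cos_eq_one_iff _).mp e2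
      have hpi := Real.pi_ne_zero
      have h2pi : (2 * Real.pi) ≠ 0 := by positivity
      refine key ⟨⟨a, ?_⟩, ⟨b, ?_⟩⟩
      · exact mul_left_cancel₀ h2pi (by linarith)
      · exact mul_left_cancel₀ h2pi (by linarith)
    have hsq : (Real.sqrt 2 - 1) ^ 2 ≠ 0 := pow_ne_zero _ (sub_ne_zero.mpr hs)
    exact mul_ne_zero (mul_ne_zero two_ne_zero hsq) hne
end
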